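/- Let H be a real Hilbert space, φ proper convex lower semicontinuous on H, y₀ ∈ D(φ), u ∈ L²(0,T;H) and y ∈ H¹(0,T;H) with y(0) = y₀. Then G_BEN(u,y) = 0 if and only if y′(t) + ∂φ(y(t)) ∋ u(t) for a.e. t ∈ (0,T), i.e. y solves the gradient flow with forcing u (Brezis–Ekeland–Nayroles principle). -/

import Mathlib

/-!
Since `∫₀ᵀ ⟪y', y⟫ = ½‖y(T)‖² - ½‖y(0)‖²`, the functional `G_BEN(u,y)` is the integral of the
Fenchel–Young gap `φ(y) + φ*(u - y') - ⟪u - y', y⟫`. The gap is nonnegative, so the integral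
vanishes iff the gap vanishes a.e., and the gap vanishes exactly when `u - y' ∈ ∂φ(y)`.
-/

open scoped RealInnerProductSpace
open MeasureTheory intervalIntegral

section

variable {H : Type*} [NormedAddCommGroup H] [InnerProductSpace ℝ H]

section FenchelYoung

variable {φ φs : H → ℝ} (hφs : ∀ ξ : H, IsLUB {r : ℝ | ∃ x : H, r = ⟪ξ, x⟫ - φ x} (φs ξ))
include hφs

theorem inner_le_add_conjugate (ξ x : H) : ⟪ξ, x⟫ ≤ φ x + φs ξ := by
  have := (hφs ξ).1 ⟨x, rfl⟩
  linarith

theorem fenchelYoung_gap_nonneg (ξ x : H) : 0 ≤ φ x + φs ξ - ⟪ξ, x⟫ := by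
  linarith [inner_le_add_conjugate hφs ξ x]

theorem fenchelYoung_gap_eq_zero_iff_mem_subdifferential (ξ x : H) :
    φ x + φs ξ - ⟪ξ, x⟫ = 0 ↔ ∀ z : H, φ x + ⟪ξ, z - x⟫ ≤ φ z := by
  constructor
  · intro hgap z
    rw [inner_sub_right]
    linarith [inner_le_add_conjugate hφs ξ z]
  · intro hsub
    have hφs_le : φs ξ ≤ ⟪ξ, x⟫ - φ x := (hφs ξ).2 <| by
      rintro r ⟨z, rfl⟩
      have := hsub z
      rw [inner_sub_right] at this
      linarith
    linarith [inner_le_add_conjugate hφs ξ x]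

end FenchelYoung

theorem integral_inner_deriv_self {y y' : ℝ → H} {a b : ℝ}
    (hder : ∀ t ∈ Set.uIcc a b, HasDerivAt y (y' t) t)
    (hint : IntervalIntegrable (fun t => ⟪y' t, y t⟫) volume a b) :
    ∫ t in a..b, ⟪y' t, y t⟫ = ‖y b‖ ^ 2 / 2 - ‖y a‖ ^ 2 / 2 := by
  refine integral_eq_sub_of_hasDerivAt (f := fun s => ‖y s‖ ^ 2 / 2) (fun t ht => ?_) hint
  have := ((hder t ht).norm_sq).div_const 2
  rwa [real_inner_comm, mul_div_cancel_left₀ _ two_ne_zero] at this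

theorem intervalIntegral_eq_zero_iff_ae_Ioo_of_nonneg {f : ℝ → ℝ} {a b : ℝ} (hab : a ≤ b)
    (hf : ∀ t, 0 ≤ f t) (hfi : IntervalIntegrable f volume a b) :
    ∫ t in a..b, f t = 0 ↔ ∀ᵐ t ∂(volume.restrict (Set.Ioo a b)), f t = 0 := by
  rw [integral_eq_zero_iff_of_le_of_nonneg_ae hab (ae_of_all _ hf) hfi,
    Measure.restrict_congr_set Ioo_ae_eq_Ioc]
  rfl

end

theorem stmt7_general {H : Type*} [NormedAddCommGroup H] [InnerProductSpace ℝ H]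
    (φ φs : H → ℝ)
    (hφs : ∀ ξ : H, IsLUB {r : ℝ | ∃ x : H, r = ⟪ξ, x⟫ - φ x} (φs ξ))
    (T : ℝ) (hT : 0 < T)
    (u y y' : ℝ → H) (y₀ : H) (h0 : y 0 = y₀)
    (hder : ∀ t, HasDerivAt y (y' t) t)
    (hint : IntervalIntegrable
      (fun t => φ (y t) + φs (u t - y' t) - ⟪u t, y t⟫) volume 0 T)
    (hint2 : IntervalIntegrable (fun t => ⟪y' t, y t⟫) volume 0 T) :
    ((∫ t in (0:ℝ)..T, (φ (y t) + φs (u t - y' t) - ⟪u t, y t⟫))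
        + ‖y T‖ ^ 2 / 2 - ‖y₀‖ ^ 2 / 2 = 0)
      ↔ (∀ᵐ t ∂(volume.restrict (Set.Ioo 0 T)),
          ∀ x : H, φ (y t) + ⟪u t - y' t, x - y t⟫ ≤ φ x) := by
  have hgap : (fun t => φ (y t) + φs (u t - y' t) - ⟪u t, y t⟫ + ⟪y' t, y t⟫)
      = fun t => φ (y t) + φs (u t - y' t) - ⟪u t - y' t, y t⟫ := by
    funext t
    rw [inner_sub_left]
    ring
  have hint_gap : IntervalIntegrable
      (fun t => φ (y t) + φs (u t - y' t) - ⟪u t - y' t, y t⟫) volume 0 T :=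
    hgap ▸ hint.add hint2
  rw [add_sub_assoc, ← h0, ← integral_inner_deriv_self (fun t _ => hder t) hint2,
    ← integral_add hint hint2, hgap,
    intervalIntegral_eq_zero_iff_ae_Ioo_of_nonneg hT.le
      (fun _ => fenchelYoung_gap_nonneg hφs _ _) hint_gap]
  exact Filter.eventually_congr <| ae_of_all _ fun _ =>
    fenchelYoung_gap_eq_zero_iff_mem_subdifferential hφs _ _

/-- the Brezis–Ekeland–Nayroles principle: with
`G_BEN(u,y) = ∫₀ᵀ (φ(y) + φ*(u - y') - ⟪u,y⟫) dt + ½‖y(T)‖² - ½‖y₀‖²`,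
one has `G_BEN(u,y) = 0` if and only if `u(t) - y'(t) ∈ ∂φ(y(t))` for
a.e. `t ∈ (0,T)`, i.e. `y` solves the gradient flow
`y' + ∂φ(y) ∋ u`, `y(0) = y₀`. -/
theorem stmt7 {H : Type*} [NormedAddCommGroup H] [InnerProductSpace ℝ H]
    [CompleteSpace H]
    (φ φs : H → ℝ)
    (hconv : ConvexOn ℝ Set.univ φ) (hlsc : LowerSemicontinuous φ)
    (hφs : ∀ ξ : H, IsLUB {r : ℝ | ∃ x : H, r = ⟪ξ, x⟫ - φ x} (φs ξ))
    (T : ℝ) (hT : 0 < T)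
    (u y y' : ℝ → H) (y₀ : H) (h0 : y 0 = y₀)
    (hder : ∀ t, HasDerivAt y (y' t) t)
    (hu : IntervalIntegrable (fun t => ‖u t‖ ^ 2) volume 0 T)
    (hy' : IntervalIntegrable (fun t => ‖y' t‖ ^ 2) volume 0 T)
    (hint : IntervalIntegrable
      (fun t => φ (y t) + φs (u t - y' t) - ⟪u t, y t⟫) volume 0 T)
    (hint2 : IntervalIntegrable (fun t => ⟪y' t, y t⟫) volume 0 T) :
    ((∫ t in (0:ℝ)..T, (φ (y t) + φs (u t - y' t) - ⟪u t, y t⟫))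
        + ‖y T‖ ^ 2 / 2 - ‖y₀‖ ^ 2 / 2 = 0)
      ↔ (∀ᵐ t ∂(volume.restrict (Set.Ioo 0 T)),
          ∀ x : H, φ (y t) + ⟪u t - y' t, x - y t⟫ ≤ φ x) :=
  stmt7_general φ φs hφs T hT u y y' y₀ h0 hder hint hint2
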